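/- Step Typing is not complete with respect to declarative D<: typing: there exist a well-formed environment Γ, a term t, and a type T such that Γ ⊢ t : T is derivable declaratively but Γ ⊬ₛ t : T in Step Typing. Concretely, in Γ = e : {E: ⊤..⊥}, f : ⊤, x : ⊤, the application f x is declaratively typable (e.g., at type ⊤), but Step Typing cannot type f x. -/
import Mathlib


/-- Types of D<: -/
inductive Ty : Type where
  | top : Ty
  | bot : Ty
  | decl (A : ℕ) (S U : Ty) : Ty        -- {A : S..U}
  | sel (x : ℕ) (A : ℕ) : Ty            -- x.A
  | all (x : ℕ) (S T : Ty) : Ty         -- ∀(x:S)T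
deriving DecidableEq

/-- Terms of D<: (ANF) -/
inductive Tm : Type where
  | var (x : ℕ) : Tm
  | tag (A : ℕ) (T : Ty) : Tm           -- {A = T}
  | lam (x : ℕ) (T : Ty) (t : Tm) : Tm
  | app (x y : ℕ) : Tm
  | lett (x : ℕ) (t u : Tm) : Tm
deriving DecidableEq

/-- Free variables of a type. -/
def Ty.fv : Ty → Finset ℕ
  | .top => ∅
  | .bot => ∅
  | .decl _ S U => S.fv ∪ U.fv
  | .sel x _ => {x}
  | .all x S T => S.fv ∪ (T.fv \ {x})

/-- Substitution of variable y for variable z in a type: [z := y]T. -/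
def Ty.substV : Ty → ℕ → ℕ → Ty
  | .top, _, _ => .top
  | .bot, _, _ => .bot
  | .decl A S U, z, y => .decl A (S.substV z y) (U.substV z y)
  | .sel x A, z, y => .sel (if x = z then y else x) A
  | .all x S T, z, y => .all x (S.substV z y) (if x = z then T else T.substV z y)

/-- Size of a type. -/
def Ty.size : Ty → ℕ
  | .top => 1
  | .bot => 1
  | .decl _ S U => 1 + S.size + U.size
  | .sel _ _ => 1
  | .all _ S T => 1 + S.size + T.size

/-- Type environments; the head is the most recently bound variable. -/
abbrev Env := List (ℕ × Ty)

def lookupE : Env → ℕ → Option Ty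
  | [], _ => none
  | (y, T) :: Γ, x => if x = y then some T else lookupE Γ x

/-- Well-formed environments. -/
inductive WfEnv : Env → Prop where
  | nil : WfEnv []
  | cons {Γ x T} : WfEnv Γ → lookupE Γ x = none → x ∉ T.fv → WfEnv ((x, T) :: Γ)

/-- Whether a type is a path-dependent type. -/
def Ty.isSel : Ty → Prop
  | .sel _ _ => True
  | _ => False

mutual
/-- Declarative D<: subtyping. -/
inductive Subty : Env → Ty → Ty → Prop where
  | bot {Γ T} : Subty Γ .bot T
  | top {Γ S} : Subty Γ S .top
  | refl {Γ T} : Subty Γ T T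
  | trans {Γ S T U} : Subty Γ S T → Subty Γ T U → Subty Γ S U
  | typ {Γ A S₁ T₁ S₂ T₂} : Subty Γ S₂ S₁ → Subty Γ T₁ T₂ →
      Subty Γ (.decl A S₁ T₁) (.decl A S₂ T₂)
  | selLow {Γ x A S T} : Typ Γ (.var x) (.decl A S T) → Subty Γ S (.sel x A)
  | selHigh {Γ x A S T} : Typ Γ (.var x) (.decl A S T) → Subty Γ (.sel x A) T
  | all {Γ x S₁ T₁ S₂ T₂} : Subty Γ S₂ S₁ → Subty ((x, S₂) :: Γ) T₁ T₂ →
      Subty Γ (.all x S₁ T₁) (.all x S₂ T₂)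

/-- Declarative D<: typing. -/
inductive Typ : Env → Tm → Ty → Prop where
  | var {Γ x T} : lookupE Γ x = some T → Typ Γ (.var x) T
  | allI {Γ x T t U} : Typ ((x, T) :: Γ) t U → x ∉ T.fv →
      Typ Γ (.lam x T t) (.all x T U)
  | typI {Γ A T} : Typ Γ (.tag A T) (.decl A T T)
  | allE {Γ x y z S T} : Typ Γ (.var x) (.all z S T) → Typ Γ (.var y) S →
      Typ Γ (.app x y) (T.substV z y)
  | lett {Γ x t u T U} : Typ Γ t T → Typ ((x, T) :: Γ) u U → x ∉ U.fv →
      Typ Γ (.lett x t u) U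
  | sub {Γ t T U} : Typ Γ t T → Subty Γ T U → Typ Γ t U
end

/-- The Exposure relation Γ ⊢ T ⇑ T'. -/
inductive Expose : Env → Ty → Ty → Prop where
  | bot {Γ x A T} : lookupE Γ x = some T → Expose Γ T .bot →
      Expose Γ (.sel x A) .bot
  | path {Γ x A T S U V} : lookupE Γ x = some T → Expose Γ T (.decl A S U) →
      Expose Γ U V → Expose Γ (.sel x A) V
  | other {Γ T} : ¬ T.isSel → Expose Γ T T

mutual
/-- Promotion Γ ⊢ T ⇑ˣ T'. -/
inductive Promo : Env → Ty → ℕ → Ty → Prop where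
  | up {Γ x A T L U} : lookupE Γ x = some T → Expose Γ T (.decl A L U) →
      Promo Γ (.sel x A) x U
  | upBot {Γ x A T} : lookupE Γ x = some T → Expose Γ T .bot →
      Promo Γ (.sel x A) x .bot
  | lam {Γ x y S S' T T'} : Demo Γ S x S' → Promo ((y, S') :: Γ) T x T' → y ≠ x →
      Promo Γ (.all y S T) x (.all y S' T')
  | varr {Γ x y A} : y ≠ x → Promo Γ (.sel y A) x (.sel y A)
  | bot {Γ x} : Promo Γ .bot x .bot
  | top {Γ x} : Promo Γ .top x .top
  | decl {Γ x A L L' U U'} : Demo Γ L x L' → Promo Γ U x U' →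
      Promo Γ (.decl A L U) x (.decl A L' U')
  | cap {Γ x S T} : Promo Γ (.all x S T) x (.all x S T)

/-- Demotion Γ ⊢ T ⇓ˣ T'. -/
inductive Demo : Env → Ty → ℕ → Ty → Prop where
  | down {Γ x A T L U} : lookupE Γ x = some T → Expose Γ T (.decl A L U) →
      Demo Γ (.sel x A) x L
  | downBot {Γ x A T} : lookupE Γ x = some T → Expose Γ T .bot →
      Demo Γ (.sel x A) x .top
  | lam {Γ x y S S' T T'} : Promo Γ S x S' → Demo ((y, S) :: Γ) T x T' → y ≠ x →
      Demo Γ (.all y S T) x (.all y S' T')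
  | varr {Γ x y A} : y ≠ x → Demo Γ (.sel y A) x (.sel y A)
  | bot {Γ x} : Demo Γ .bot x .bot
  | top {Γ x} : Demo Γ .top x .top
  | decl {Γ x A L L' U U'} : Promo Γ L x L' → Demo Γ U x U' →
      Demo Γ (.decl A L U) x (.decl A L' U')
  | cap {Γ x S T} : Demo Γ (.all x S T) x (.all x S T)
end

/-- Step Subtyping Γ ⊢ₛ S <: T. -/
inductive SSub : Env → Ty → Ty → Prop where
  | bot {Γ T} : SSub Γ .bot T
  | top {Γ T} : SSub Γ T .top
  | typ {Γ A S₁ T₁ S₂ T₂} : SSub Γ S₂ S₁ → SSub Γ T₁ T₂ →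
      SSub Γ (.decl A S₁ T₁) (.decl A S₂ T₂)
  | refl {Γ x A} : SSub Γ (.sel x A) (.sel x A)
  | selHigh {Γ x A T S₁ S₂ U} : lookupE Γ x = some T →
      Expose Γ T (.decl A S₁ S₂) → SSub Γ S₂ U → SSub Γ (.sel x A) U
  | selLow {Γ x A T S₁ S₂ U} : lookupE Γ x = some T →
      Expose Γ T (.decl A S₁ S₂) → SSub Γ U S₁ → SSub Γ U (.sel x A)
  | botSel {Γ x A T U} : lookupE Γ x = some T → Expose Γ T .bot →
      SSub Γ U (.sel x A)
  | selBot {Γ x A T U} : lookupE Γ x = some T → Expose Γ T .bot →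
      SSub Γ (.sel x A) U
  | all {Γ x S T₁ T₂} : SSub ((x, S) :: Γ) T₁ T₂ →
      SSub Γ (.all x S T₁) (.all x S T₂)

/-- Step Typing Γ ⊢ₛ t : T. -/
inductive STyp : Env → Tm → Ty → Prop where
  | var {Γ x T} : lookupE Γ x = some T → STyp Γ (.var x) T
  | allI {Γ x T t U} : STyp ((x, T) :: Γ) t U → x ∉ T.fv →
      STyp Γ (.lam x T t) (.all x T U)
  | typI {Γ A T} : STyp Γ (.tag A T) (.decl A T T)
  | allE {Γ x y z V S T U} : STyp Γ (.var x) V → Expose Γ V (.all z S T) →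
      STyp Γ (.var y) U → SSub Γ U S → STyp Γ (.app x y) (T.substV z y)
  | appBot {Γ x y T U} : STyp Γ (.var x) T → Expose Γ T .bot →
      STyp Γ (.var y) U → STyp Γ (.app x y) .bot
  | lett {Γ x t u T U' U} : STyp Γ t T → STyp ((x, T) :: Γ) u U' →
      Promo ((x, T) :: Γ) U' x U → STyp Γ (.lett x t u) U

/-- Lookup returning also the remaining (earlier) environment Γ₁,
    for Γ = Γ₂, x:T, Γ₁. -/
inductive LookupRest : Env → ℕ → Ty → Env → Prop where
  | here {Γ x T} : LookupRest ((x, T) :: Γ) x T Γ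
  | there {Γ x y T S Γ'} : x ≠ y → LookupRest Γ x T Γ' →
      LookupRest ((y, S) :: Γ) x T Γ'

/-- The weight of a type in a context. -/
inductive Weight : Env → Ty → ℕ → Prop where
  | top {Γ} : Weight Γ .top 1
  | bot {Γ} : Weight Γ .bot 1
  | decl {Γ A S T m n} : Weight Γ S m → Weight Γ T n →
      Weight Γ (.decl A S T) (1 + max m n)
  | sel {Γ x A T Γ₁ n} : LookupRest Γ x T Γ₁ → Weight Γ₁ T n →
      Weight Γ (.sel x A) (1 + n)
  | all {Γ x S T n} : Weight ((x, S) :: Γ) T n → Weight Γ (.all x S T) (1 + n)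

/-- Recursive calls made by the Exposure algorithm. -/
inductive ExposeCall : Env × Ty → Env × Ty → Prop where
  | lookup {Γ x A T} : lookupE Γ x = some T →
      ExposeCall (Γ, T) (Γ, .sel x A)
  | bound {Γ x A T S U} : lookupE Γ x = some T → Expose Γ T (.decl A S U) →
      ExposeCall (Γ, U) (Γ, .sel x A)

/-- Recursive calls made by the Promotion (true) / Demotion (false) algorithms. -/
inductive PDCall : Bool × Env × ℕ × Ty → Bool × Env × ℕ × Ty → Prop where
  | promoLamArg {Γ x y S T} : y ≠ x →
      PDCall (false, Γ, x, S) (true, Γ, x, .all y S T)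
  | promoLamBody {Γ x y S S' T} : y ≠ x → Demo Γ S x S' →
      PDCall (true, ((y, S') :: Γ), x, T) (true, Γ, x, .all y S T)
  | promoDeclLow {Γ x A L U} : PDCall (false, Γ, x, L) (true, Γ, x, .decl A L U)
  | promoDeclHigh {Γ x A L U} : PDCall (true, Γ, x, U) (true, Γ, x, .decl A L U)
  | demoLamArg {Γ x y S T} : y ≠ x →
      PDCall (true, Γ, x, S) (false, Γ, x, .all y S T)
  | demoLamBody {Γ x y S T} : y ≠ x →
      PDCall (false, ((y, S) :: Γ), x, T) (false, Γ, x, .all y S T)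
  | demoDeclLow {Γ x A L U} : PDCall (true, Γ, x, L) (false, Γ, x, .decl A L U)
  | demoDeclHigh {Γ x A L U} : PDCall (false, Γ, x, U) (false, Γ, x, .decl A L U)

/-- Recursive calls made by the Step Subtyping algorithm (premises of rules). -/
inductive SSubCall : Env × Ty × Ty → Env × Ty × Ty → Prop where
  | typLow {Γ A S₁ T₁ S₂ T₂} :
      SSubCall (Γ, S₂, S₁) (Γ, .decl A S₁ T₁, .decl A S₂ T₂)
  | typHigh {Γ A S₁ T₁ S₂ T₂} :
      SSubCall (Γ, T₁, T₂) (Γ, .decl A S₁ T₁, .decl A S₂ T₂)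
  | selHigh {Γ x A T S₁ S₂ U} : lookupE Γ x = some T →
      Expose Γ T (.decl A S₁ S₂) → SSubCall (Γ, S₂, U) (Γ, .sel x A, U)
  | selLow {Γ x A T S₁ S₂ U} : lookupE Γ x = some T →
      Expose Γ T (.decl A S₁ S₂) → SSubCall (Γ, U, S₁) (Γ, U, .sel x A)
  | all {Γ x S T₁ T₂} :
      SSubCall (((x, S) :: Γ), T₁, T₂) (Γ, .all x S T₁, .all x S T₂)

/-- B = {V: ⊤..⊤} (label V = 1). -/
def tyB : Ty := .decl 1 .top .top
/-- C = {Z: ⊤..⊤} (label Z = 2). -/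
def tyC : Ty := .decl 2 .top .top
/-- Γ⋆ = e : {E: ∀(b:B)B .. ∀(b:B)C}, with e = 0, E = 0, b = 1. -/
def GammaStar : Env := [(0, .decl 0 (.all 1 tyB tyB) (.all 1 tyB tyC))]

/-- The blue colour predicate: e.E is blue, and every function type is blue. -/
inductive Blue : Ty → Prop where
  | sel : Blue (.sel 0 0)
  | all {x S T} : Blue (.all x S T)

/-- The red colour predicate on type declarations. -/
inductive Red : Ty → Prop where
  | mk {A E₁ E₂} : (E₁ = Ty.bot ∨ Blue E₁) → (E₂ = Ty.top ∨ Blue E₂) →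
      Red (.decl A E₁ E₂)

/-- The environment e : {E: ⊤..⊥}, f : ⊤, x : ⊤
    (e = 0, E = 0, f = 1, x = 2; head is the most recent binding). -/
def GammaBad : Env := [(2, Ty.top), (1, Ty.top), (0, Ty.decl 0 Ty.top Ty.bot)]

/-- Step Typing is incomplete w.r.t. declarative typing:
in GammaBad the application f x is declaratively typable at ⊤, but Step
Typing cannot assign it any type. -/
theorem step_typing_incomplete :
    WfEnv GammaBad ∧ Typ GammaBad (.app 1 2) Ty.top ∧
      ∀ T : Ty, ¬ STyp GammaBad (.app 1 2) T := by
  refine ⟨?_, ?_, ?_⟩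
  · exact WfEnv.cons (WfEnv.cons (WfEnv.cons WfEnv.nil rfl (by simp [Ty.fv]))
      rfl (by simp [Ty.fv])) rfl (by simp [Ty.fv])
  · have he : Typ GammaBad (.var 0) (.decl 0 Ty.top Ty.bot) := Typ.var rfl
    have htb : Subty GammaBad Ty.top Ty.bot :=
      Subty.trans (Subty.selLow he) (Subty.selHigh he)
    have hf : Typ GammaBad (.var 1) (.all 0 Ty.top Ty.top) :=
      Typ.sub (Typ.sub (Typ.var rfl) htb) Subty.bot
    have hx : Typ GammaBad (.var 2) Ty.top := Typ.var rfl
    have := Typ.allE hf hx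
    simpa [Ty.substV] using this
  · intro T h
    have extop : ∀ V, Expose GammaBad Ty.top V → V = Ty.top := by
      intro V hv
      cases hv with
      | other _ => rfl
    cases h with
    | allE h1 h2 h3 h4 =>
      cases h1 with
      | var hl =>
        simp [GammaBad, lookupE] at hl
        subst hl
        exact absurd (extop _ h2) (by intro hh; cases hh)
    | appBot h1 h2 h3 =>
      cases h1 with
      | var hl =>
        simp [GammaBad, lookupE] at hl
        subst hl
        exact absurd (extop _ h2) (by intro hh; cases hh)
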